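/- Let k be a field, M an affine semigroup in ℤ^n with ℤM = ℤ^n, and N a nonzero finitely generated k[M]-module equipped with a ℤ^n-grading N = ⊕_{c ∈ ℤ^n} N_c (a direct sum decomposition into k-subspaces) such that t^a · N_c ⊆ N_{a+c} for all a ∈ M and c ∈ ℤ^n. Then every associated prime of N is equal to p_F for some face F of M. -/

import Mathlib

/-- `F` is a face of the affine semigroup `M ⊆ ℤⁿ`. -/
def IsFace {n : ℕ} (M F : AddSubmonoid (Fin n → ℤ)) : Prop :=
  F ≤ M ∧ ∀ a ∈ M, ∀ b ∈ M, a + b ∈ F → a ∈ F ∧ b ∈ F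

/-- The ideal `p_F` of `k[M]` generated by the monomials `t^a` with `a ∈ M \ F`. -/
noncomputable def facePrime (k : Type*) [Field k] {n : ℕ} (M F : AddSubmonoid (Fin n → ℤ)) :
    Ideal (AddMonoidAlgebra k M) :=
  Ideal.span {x | ∃ a : M, (a : Fin n → ℤ) ∉ F ∧ x = AddMonoidAlgebra.of' k M a}

/-!
Mathlib's associated primes are the primes of the form `√(Ann x)`, and the heart of the argument
is that `√(Ann x)` is a monomial ideal. Order `ℤⁿ` lexicographically. If `f • x = 0` and `t^a` is
the lowest monomial of `f`, comparing lowest graded components shows that `t^a` kills the lowest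
component of `x`, so `t^a • x` has fewer nonzero components than `x`; iterating, a power of `t^a`
kills `x`. Peeling off lowest terms, every monomial of an element of `√(Ann x)` lies in it. For a
prime monomial ideal `p`, the exponents `a` with `t^a ∉ p` form a face `F`, and `p = p_F`.
-/

open AddMonoidAlgebra DirectSum

namespace AddMonoidAlgebra

variable {R A : Type*}

lemma of'_add [Semiring R] [AddMonoid A] (a b : A) :
    of' R A (a + b) = of' R A a * of' R A b := by
  simp only [of'_apply, single_mul_single, mul_one]

lemma single_eq_smul_of' [Semiring R] [AddMonoid A] (a : A) (r : R) :
    single a r = r • of' R A a := by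
  rw [of'_apply, smul_single', mul_one]

lemma smul_eq_sum_smul_of'_smul [Semiring R] [AddMonoid A] {N : Type*} [AddCommMonoid N]
    [Module R[A] N] [Module R N] [IsScalarTower R R[A] N] (f : R[A]) (x : N) :
    f • x = ∑ b ∈ f.coeff.support, f.coeff b • of' R A b • x := by
  conv_lhs => rw [← sum_coeff_single f]
  simp only [Finsupp.sum, Finset.sum_smul, single_eq_smul_of', smul_assoc]

end AddMonoidAlgebra

def IsMonomialIdeal {R A : Type*} [Semiring R] [AddMonoid A] (I : Ideal R[A]) : Prop :=
  ∀ f ∈ I, ∀ a ∈ f.coeff.support, of' R A a ∈ I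

lemma isMonomialIdeal_of_forall_min {R A ι : Type*} [Ring R] [AddMonoid A] [LinearOrder ι]
    (deg : A → ι) {I : Ideal R[A]}
    (hI : ∀ f ∈ I, ∀ a ∈ f.coeff.support, (∀ b ∈ f.coeff.support, deg a ≤ deg b) →
      of' R A a ∈ I) :
    IsMonomialIdeal I := by
  classical
  intro f hf
  induction h : f.coeff.support.card using Nat.strong_induction_on generalizing f with
  | _ m ih =>
    intro a ha
    obtain ⟨a₁, ha₁, ha₁min⟩ := f.coeff.support.exists_min_image deg ⟨a, ha⟩
    have hfa₁ := hI f hf a₁ ha₁ ha₁min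
    obtain rfl | hne := eq_or_ne a a₁
    · exact hfa₁
    have hg : (f.erase a₁).coeff.support = f.coeff.support.erase a₁ := by
      rw [coeff_erase, Finsupp.support_erase]
    have herase : f.erase a₁ ∈ I := by
      rw [eq_sub_of_add_eq (f.erase_add_single a₁), single_eq_smul_of']
      exact I.sub_mem hf (I.smul_of_tower_mem _ hfa₁)
    refine ih _ ?_ _ herase rfl a ?_
    · rw [← h, hg]
      exact Finset.card_erase_lt_of_mem ha₁
    · rw [hg]
      exact Finset.mem_erase.mpr ⟨hne, ha⟩

section Graded

variable {R Γ N : Type*} [Semiring R] [AddCommGroup Γ] {M : AddSubmonoid Γ}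
  [AddCommMonoid N] [Module R[M] N] [Module R N] (D : Γ → Submodule R N)

variable (M) in
def IsMonomialGrading : Prop :=
  ∀ (a : M) (c : Γ), ∀ x ∈ D c, of' R M a • x ∈ D (a + c)

variable {D} [DecidableEq Γ] [Decomposition D]

lemma IsMonomialGrading.coe_decompose_of'_smul (hD : IsMonomialGrading M D) (a : M) (x : N)
    (d : Γ) : (decompose D (of' R M a • x) d : N) = of' R M a • (decompose D x (d - a) : N) := by
  induction x using Decomposition.inductionOn D with
  | zero => simp
  | @homogeneous c x =>
    have hax := hD a c x x.2
    by_cases h : (a : Γ) + c = d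
    · subst h
      rw [decompose_of_mem_same D hax, add_sub_cancel_left, decompose_of_mem_same D x.2]
    · rw [decompose_of_mem_ne D hax h, decompose_of_mem_ne D x.2 (by rintro rfl; simp at h),
        smul_zero]
  | add x y hx hy =>
    rw [smul_add, decompose_add, DirectSum.add_apply, Submodule.coe_add, hx, hy, decompose_add,
      DirectSum.add_apply, Submodule.coe_add, smul_add]

lemma IsMonomialGrading.coe_decompose_smul [IsScalarTower R R[M] N] (hD : IsMonomialGrading M D)
    (f : R[M]) (x : N) (d : Γ) :
    (decompose D (f • x) d : N) =
      ∑ b ∈ f.coeff.support, f.coeff b • of' R M b • (decompose D x (d - b) : N) := by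
  rw [smul_eq_sum_smul_of'_smul, decompose_sum, DFinsupp.finsetSum_apply,
    AddSubmonoidClass.coe_finsetSum]
  refine Finset.sum_congr rfl fun b _ => ?_
  rw [decompose_smul, DirectSum.smul_apply, Submodule.coe_smul, hD.coe_decompose_of'_smul]

lemma IsMonomialGrading.card_support_decompose_of'_smul_lt
    [∀ (i : Γ) (y : D i), Decidable (y ≠ 0)] (hD : IsMonomialGrading M D) {a : M} {x : N} {c : Γ}
    (hc : decompose D x c ≠ 0) (hac : of' R M a • (decompose D x c : N) = 0) :
    (decompose D (of' R M a • x)).support.card < (decompose D x).support.card := by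
  calc (decompose D (of' R M a • x)).support.card
      ≤ (((decompose D x).support.erase c).image ((a : Γ) + ·)).card := by
        refine Finset.card_le_card fun d hd => ?_
        have hd' : of' R M a • (decompose D x (d - a) : N) ≠ 0 := by
          rw [← hD.coe_decompose_of'_smul]
          exact_mod_cast DFinsupp.mem_support_iff.mp hd
        refine Finset.mem_image.mpr ⟨d - a, Finset.mem_erase.mpr ⟨?_, ?_⟩, add_sub_cancel _ _⟩
        · rintro rfl
          exact hd' hac
        · refine DFinsupp.mem_support_iff.mpr fun h0 => hd' ?_
          rw [h0, ZeroMemClass.coe_zero, smul_zero]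
    _ ≤ ((decompose D x).support.erase c).card := Finset.card_image_le
    _ < (decompose D x).support.card :=
        Finset.card_erase_lt_of_mem (DFinsupp.mem_support_iff.mpr hc)

end Graded

section Ordered

-- The order that `φ` pulls back to `Γ` serves as a monomial order.
variable {k Γ Λ N : Type*} [Field k] [AddCommGroup Γ] [AddCommGroup Λ] [LinearOrder Λ]
  [IsOrderedAddMonoid Λ] {φ : Γ →+ Λ} {M : AddSubmonoid Γ} [AddCommMonoid N] [Module k[M] N]
  [Module k N] [IsScalarTower k k[M] N] {D : Γ → Submodule k N} [DecidableEq Γ] [Decomposition D]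

lemma IsMonomialGrading.coe_decompose_smul_add_of_min (hD : IsMonomialGrading M D)
    (hφ : Function.Injective φ) {f : k[M]} {x : N} {a₁ : M} {c₁ : Γ}
    (ha₁ : a₁ ∈ f.coeff.support) (ha₁min : ∀ b ∈ f.coeff.support, φ a₁ ≤ φ b)
    (hc₁min : ∀ c, decompose D x c ≠ 0 → φ c₁ ≤ φ c) :
    (decompose D (f • x) (a₁ + c₁) : N) = f.coeff a₁ • of' k M a₁ • (decompose D x c₁ : N) := by
  rw [hD.coe_decompose_smul, Finset.sum_eq_single_of_mem a₁ ha₁, add_sub_cancel_left]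
  intro b hb hba₁
  have hlt : φ (a₁ + c₁ - b) < φ c₁ := by
    have : φ a₁ < φ b :=
      (ha₁min b hb).lt_of_ne ((hφ.comp Subtype.coe_injective).ne hba₁.symm)
    rw [map_sub, map_add, sub_lt_iff_lt_add, add_comm (φ c₁)]
    exact add_lt_add_left this (φ c₁)
  rw [not_imp_comm.mp (hc₁min _) hlt.not_ge, ZeroMemClass.coe_zero, smul_zero, smul_zero]

lemma IsMonomialGrading.exists_pow_of'_smul_eq_zero (hD : IsMonomialGrading M D)
    (hφ : Function.Injective φ) {f : k[M]} {a₁ : M} (ha₁ : a₁ ∈ f.coeff.support)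
    (ha₁min : ∀ b ∈ f.coeff.support, φ a₁ ≤ φ b) {x : N} (hfx : f • x = 0) :
    ∃ r : ℕ, of' k M a₁ ^ r • x = 0 := by
  classical
  induction h : (decompose D x).support.card using Nat.strong_induction_on generalizing x with
  | _ m ih =>
    obtain rfl | hx := eq_or_ne x 0
    · exact ⟨0, smul_zero _⟩
    have hsupp : (decompose D x).support.Nonempty :=
      Finset.nonempty_iff_ne_empty.mpr fun h0 =>
        hx ((decompose D).injective (by rw [DFinsupp.support_eq_empty.mp h0, decompose_zero]))
    obtain ⟨c₁, hc₁, hc₁min⟩ := (decompose D x).support.exists_min_image φ hsupp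
    have hkill : of' k M a₁ • (decompose D x c₁ : N) = 0 := by
      have h0 := hD.coe_decompose_smul_add_of_min hφ ha₁ ha₁min
        (fun c hc => hc₁min c (DFinsupp.mem_support_iff.mpr hc)) (x := x)
      rw [hfx, decompose_zero, DirectSum.zero_apply, ZeroMemClass.coe_zero, eq_comm,
        smul_eq_zero_iff_right (Finsupp.mem_support_iff.mp ha₁)] at h0
      exact h0
    obtain ⟨r, hr⟩ := ih _ (h ▸ hD.card_support_decompose_of'_smul_lt
      (DFinsupp.mem_support_iff.mp hc₁) hkill) (by rw [smul_comm, hfx, smul_zero]) rfl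
    exact ⟨r + 1, by rw [pow_succ, mul_smul, hr]⟩

lemma IsMonomialGrading.exists_pow_of'_smul_eq_zero_of_pow_smul (hD : IsMonomialGrading M D)
    (hφ : Function.Injective φ) {f : k[M]} {a₁ : M} (ha₁ : a₁ ∈ f.coeff.support)
    (ha₁min : ∀ b ∈ f.coeff.support, φ a₁ ≤ φ b) (m : ℕ) {x : N} (hfx : f ^ m • x = 0) :
    ∃ r : ℕ, of' k M a₁ ^ r • x = 0 := by
  induction m generalizing x with
  | zero => exact ⟨0, hfx⟩
  | succ m ih =>
    rw [pow_succ', mul_smul] at hfx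
    obtain ⟨r, hr⟩ := hD.exists_pow_of'_smul_eq_zero hφ ha₁ ha₁min hfx
    obtain ⟨s, hs⟩ := ih (x := of' k M a₁ ^ r • x) (by rw [smul_comm, hr])
    exact ⟨s + r, by rw [pow_add, mul_smul, hs]⟩

lemma IsMonomialGrading.isMonomialIdeal_radical_colon (hD : IsMonomialGrading M D)
    (hφ : Function.Injective φ) (x : N) :
    IsMonomialIdeal ((⊥ : Submodule k[M] N).colon {x}).radical := by
  refine isMonomialIdeal_of_forall_min (φ ∘ Subtype.val) fun f ⟨m, hm⟩ a₁ ha₁ ha₁min => ?_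
  rw [Submodule.mem_colon_singleton, Submodule.mem_bot] at hm
  obtain ⟨r, hr⟩ := hD.exists_pow_of'_smul_eq_zero_of_pow_smul hφ ha₁ ha₁min m hm
  exact ⟨r, Submodule.mem_colon_singleton.mpr hr⟩

end Ordered

section Face

variable {R Γ : Type*} [CommSemiring R] [AddCommMonoid Γ] {M : AddSubmonoid Γ}

def primeFace (p : Ideal R[M]) [p.IsPrime] : AddSubmonoid Γ where
  carrier := {v | ∃ h : v ∈ M, of' R M ⟨v, h⟩ ∉ p}
  zero_mem' := ⟨M.zero_mem, fun h => Ideal.IsPrime.ne_top ‹_› ((Ideal.eq_top_iff_one p).mpr h)⟩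
  add_mem' := by
    rintro v w ⟨hv, hvp⟩ ⟨hw, hwp⟩
    refine ⟨M.add_mem hv hw, fun h => ?_⟩
    rw [show (⟨v + w, _⟩ : M) = ⟨v, hv⟩ + ⟨w, hw⟩ from rfl, of'_add] at h
    exact (Ideal.IsPrime.mem_or_mem ‹_› h).elim hvp hwp

variable {p : Ideal R[M]} [p.IsPrime]

lemma coe_mem_primeFace {a : M} : (a : Γ) ∈ primeFace p ↔ of' R M a ∉ p :=
  ⟨fun ⟨_, h⟩ => h, fun h => ⟨a.2, h⟩⟩

lemma primeFace_le : primeFace p ≤ M := fun _ ⟨h, _⟩ => h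

end Face

section AffineSemigroup

variable {k : Type*} [Field k] {n : ℕ} {M : AddSubmonoid (Fin n → ℤ)} {p : Ideal k[M]} [p.IsPrime]

lemma isFace_primeFace : IsFace M (primeFace p) := by
  refine ⟨primeFace_le, fun a ha b hb hab => ?_⟩
  obtain ⟨_, habp⟩ := hab
  rw [show (⟨a + b, _⟩ : M) = ⟨a, ha⟩ + ⟨b, hb⟩ from rfl, of'_add] at habp
  exact ⟨coe_mem_primeFace (a := ⟨a, ha⟩) |>.mpr fun h => habp (p.mul_mem_right _ h),
    coe_mem_primeFace (a := ⟨b, hb⟩) |>.mpr fun h => habp (p.mul_mem_left _ h)⟩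

lemma facePrime_primeFace_le : facePrime k M (primeFace p) ≤ p := by
  rw [facePrime, Ideal.span_le]
  rintro _ ⟨a, ha, rfl⟩
  exact not_not.mp fun h => ha (coe_mem_primeFace.mpr h)

lemma IsMonomialIdeal.le_facePrime_primeFace (hp : IsMonomialIdeal p) :
    p ≤ facePrime k M (primeFace p) := by
  intro f hf
  rw [← sum_coeff_single f]
  refine Ideal.sum_mem _ fun a ha => ?_
  rw [single_eq_smul_of']
  exact Submodule.smul_of_tower_mem _ _
    (Ideal.subset_span ⟨a, fun h => coe_mem_primeFace.mp h (hp f hf a ha), rfl⟩)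

end AffineSemigroup

theorem associatedPrime_of_graded_is_facePrime_general
    (k : Type*) [Field k] (n : ℕ)
    (M : AddSubmonoid (Fin n → ℤ))
    (N : Type*) [AddCommGroup N] [Module (AddMonoidAlgebra k M) N]
    [Module k N] [IsScalarTower k (AddMonoidAlgebra k M) N]
    (D : (Fin n → ℤ) → Submodule k N)
    (hinternal : DirectSum.IsInternal D)
    (hgrading : ∀ (a : M) (c : Fin n → ℤ), ∀ x ∈ D c,
      (AddMonoidAlgebra.of' k M a) • x ∈ D ((a : Fin n → ℤ) + c)) :
    ∀ p ∈ associatedPrimes (AddMonoidAlgebra k M) N,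
      ∃ F : AddSubmonoid (Fin n → ℤ), IsFace M F ∧ p = facePrime k M F := by
  classical
  rintro p ⟨hp, x, rfl⟩
  have := hinternal.chooseDecomposition
  have hmon : IsMonomialIdeal ((⊥ : Submodule k[M] N).colon {x}).radical :=
    IsMonomialGrading.isMonomialIdeal_radical_colon hgrading
      (φ := (toLexAddEquiv (Fin n → ℤ)).toAddMonoidHom) (toLexAddEquiv _).injective x
  exact ⟨primeFace _, isFace_primeFace,
    le_antisymm hmon.le_facePrime_primeFace facePrime_primeFace_le⟩

/-- Every associated prime of a nonzero finitely generated `ℤⁿ`-graded module over the affine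
semigroup ring `k[M]` (with `ℤM = ℤⁿ`) is the monomial prime `p_F` of a face `F` of `M`. -/
theorem associatedPrime_of_graded_is_facePrime
    (k : Type*) [Field k] (n : ℕ) (hn : 1 ≤ n)
    (M : AddSubmonoid (Fin n → ℤ)) (hM : M.FG)
    (hZ : AddSubgroup.closure (M : Set (Fin n → ℤ)) = ⊤)
    (N : Type*) [AddCommGroup N] [Module (AddMonoidAlgebra k M) N]
    [Module k N] [IsScalarTower k (AddMonoidAlgebra k M) N]
    [Nontrivial N] [Module.Finite (AddMonoidAlgebra k M) N]
    (D : (Fin n → ℤ) → Submodule k N)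
    (hinternal : DirectSum.IsInternal D)
    (hgrading : ∀ (a : M) (c : Fin n → ℤ), ∀ x ∈ D c,
      (AddMonoidAlgebra.of' k M a) • x ∈ D ((a : Fin n → ℤ) + c)) :
    ∀ p ∈ associatedPrimes (AddMonoidAlgebra k M) N,
      ∃ F : AddSubmonoid (Fin n → ℤ), IsFace M F ∧ p = facePrime k M F :=
  associatedPrime_of_graded_is_facePrime_general k n M N D hinternal hgrading
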